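/- In the root system of type B_l realized with orthogonal basis ε_1,...,ε_l with |ε_j|^2 = 1/(2(2l-1)), among the positive roots whose coefficient m_i of α_i (for fixed i < l) is odd, the highest is ε_1 + ε_{i+1}, with squared length 1/(2l-1). -/

import Mathlib

/-!
Since `α j = ε j - ε (j+1)` and `α l = ε l`, every `ε a` is the tail sum `α a + ⋯ + α l` and
every difference `ε a - ε b` with `a ≤ b` is the partial sum `α a + ⋯ + α (b-1)`. Writing
`ε 1 + ε (i+1) - β` as a sum of such pieces shows that it is a nonnegative integer combination
of simple roots. The length is `2 |ε j|^2` by orthogonality.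
-/

open RealInnerProductSpace Finset

section

variable {V : Type*} [AddCommGroup V]

def IsNatCombination [Module ℝ V] (α : ℕ → V) (s : Finset ℕ) (v : V) : Prop :=
  ∃ c : ℕ → ℕ, v = ∑ k ∈ s, (c k : ℝ) • α k

namespace IsNatCombination

variable [Module ℝ V] {α : ℕ → V} {s : Finset ℕ} {v w : V}

theorem add (hv : IsNatCombination α s v) (hw : IsNatCombination α s w) :
    IsNatCombination α s (v + w) := by
  obtain ⟨c, rfl⟩ := hv
  obtain ⟨d, rfl⟩ := hw
  refine ⟨c + d, ?_⟩
  simp only [Pi.add_apply, Nat.cast_add, add_smul, sum_add_distrib]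

theorem sum_of_subset {t : Finset ℕ} (hts : t ⊆ s) : IsNatCombination α s (∑ k ∈ t, α k) := by
  refine ⟨fun k => if k ∈ t then 1 else 0, ?_⟩
  simp only [Nat.cast_ite, Nat.cast_one, Nat.cast_zero, ite_smul, one_smul, zero_smul,
    ← sum_filter, filter_mem_eq_inter, inter_eq_right.mpr hts]

end IsNatCombination

variable {ε α : ℕ → V}

theorem sub_eq_sum_Ico {a b : ℕ} (hα : ∀ k ∈ Ico a b, α k = ε k - ε (k + 1)) (hab : a ≤ b) :
    ε a - ε b = ∑ k ∈ Ico a b, α k := by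
  rw [← neg_sub, ← sum_Ico_sub (f := ε) hab, ← sum_neg_distrib]
  exact sum_congr rfl fun k hk => by rw [neg_sub, hα k hk]

theorem eq_sum_Icc {a l : ℕ} (hα : ∀ k ∈ Ico a l, α k = ε k - ε (k + 1)) (hαl : α l = ε l)
    (hal : a ≤ l) : ε a = ∑ k ∈ Icc a l, α k := by
  rw [← Ico_add_one_right_eq_Icc, sum_Ico_succ_top hal, ← sub_eq_sum_Ico hα hal, hαl,
    sub_add_cancel]

end

/-- In the root system of type `B_l` with orthogonal basis `ε 1, ..., ε l` of squared
length `1/(2(2l-1))`, simple roots `α j = ε j - ε (j+1)` for `j < l` and `α l = ε l`,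
fix `i` with `1 ≤ i < l`.  Among the positive roots whose coefficient of `α i` is
odd — namely `ε a` with `a ≤ i`, and `ε a ± ε b` with `a ≤ i < b` — the highest is
`ε 1 + ε (i+1)`, and it has squared length `1/(2l-1)`. -/
theorem stmt18 (V : Type*) [NormedAddCommGroup V] [InnerProductSpace ℝ V]
    (l : ℕ) (ε : ℕ → V) (α : ℕ → V)
    (hip : ∀ a b, 1 ≤ a → a ≤ l → 1 ≤ b → b ≤ l →
      ⟪ε a, ε b⟫ = if a = b then 1 / (2 * (2 * (l : ℝ) - 1)) else 0)
    (hα : ∀ j, 1 ≤ j → j < l → α j = ε j - ε (j + 1)) (hαl : α l = ε l)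
    (i : ℕ) (hi1 : 1 ≤ i) (hil : i < l) :
    (∀ β : V,
      ((∃ a, 1 ≤ a ∧ a ≤ i ∧ β = ε a) ∨
        (∃ a b, 1 ≤ a ∧ a ≤ i ∧ i < b ∧ b ≤ l ∧
          (β = ε a - ε b ∨ β = ε a + ε b))) →
      ∃ c : ℕ → ℕ,
        (ε 1 + ε (i + 1)) - β = ∑ k ∈ Finset.Icc 1 l, (c k : ℝ) • α k) ∧
    ⟪ε 1 + ε (i + 1), ε 1 + ε (i + 1)⟫ = 1 / (2 * (l : ℝ) - 1) := by
  have hα' : ∀ a, 1 ≤ a → ∀ k ∈ Ico a l, α k = ε k - ε (k + 1) := fun a ha k hk =>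
    hα k (ha.trans (mem_Ico.mp hk).1) (mem_Ico.mp hk).2
  have hdiff : ∀ a b, 1 ≤ a → a ≤ b → b ≤ l → IsNatCombination α (Icc 1 l) (ε a - ε b) :=
    fun a b ha hab hbl => by
      rw [sub_eq_sum_Ico (fun k hk => hα' a ha k (Ico_subset_Ico_right hbl hk)) hab]
      exact .sum_of_subset fun k hk => by simp only [mem_Icc, mem_Ico] at hk ⊢; omega
  have htail : ∀ a, 1 ≤ a → a ≤ l → IsNatCombination α (Icc 1 l) (ε a) := fun a ha hal => by
    rw [eq_sum_Icc (hα' a ha) hαl hal]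
    exact .sum_of_subset (Icc_subset_Icc_left ha)
  refine ⟨fun β hβ => ?_, ?_⟩
  · rcases hβ with ⟨a, ha, hai, rfl⟩ | ⟨a, b, ha, hai, hib, hbl, rfl | rfl⟩
    · rw [show ε 1 + ε (i + 1) - ε a = (ε 1 - ε a) + ε (i + 1) by abel]
      exact (hdiff 1 a le_rfl ha (by omega)).add (htail (i + 1) (by omega) hil)
    · rw [show ε 1 + ε (i + 1) - (ε a - ε b) = (ε 1 - ε a) + ε (i + 1) + ε b by abel]
      exact ((hdiff 1 a le_rfl ha (by omega)).add (htail (i + 1) (by omega) hil)).add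
        (htail b (by omega) hbl)
    · rw [show ε 1 + ε (i + 1) - (ε a + ε b) = (ε 1 - ε a) + (ε (i + 1) - ε b) by abel]
      exact (hdiff 1 a le_rfl ha (by omega)).add (hdiff (i + 1) b (by omega) hib hbl)
  · rw [real_inner_add_add_self, hip 1 1 le_rfl (by omega) le_rfl (by omega),
      hip 1 (i + 1) le_rfl (by omega) (by omega) hil,
      hip (i + 1) (i + 1) (by omega) hil (by omega) hil, if_neg (show 1 ≠ i + 1 by omega)]
    simp only [if_true]
    generalize 2 * (l : ℝ) - 1 = y
    ring
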